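/- For n+1 tasks with sorted arrivals a_1 ≤ ... ≤ a_{n+1}, assuming FCFS is optimal for any n tasks (induction hypothesis), among all orderings ending with task i, the ordering that processes the remaining tasks in FCFS order followed by task i has makespan at least that of the full FCFS ordering (1,2,...,n+1). -/

import Mathlib

/-!
Moving a task `i` from its FCFS position to the end never helps: each exchange of `i` with a
later task `j` (so `a i ≤ a j`) does not decrease the completion time of the pair, because
after `j` is served the server is already past `a i`. Since `comp` is monotone in the start
time, these exchanges propagate to the completion time of the whole queue.
-/

/-- Completion time of processing tasks in the given order, starting from time `C`. -/
def comp (a e : ℕ → ℝ) : ℝ → List ℕ → ℝ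
  | C, [] => C
  | C, i :: l => comp a e (max C (a i) + e i) l

/-- Makespan of a queue of tasks (indices). -/
def makespan (a e : ℕ → ℝ) (l : List ℕ) : ℝ := comp a e 0 l

section Exchange

variable {a e : ℕ → ℝ}

lemma comp_mono (l : List ℕ) {C C' : ℝ} (h : C ≤ C') : comp a e C l ≤ comp a e C' l := by
  induction l generalizing C C' with
  | nil => exact h
  | cons j l ih => exact ih (by gcongr)

lemma comp_pair_le_swap (he : ∀ k, 0 ≤ e k) {i j : ℕ} (hij : a i ≤ a j) (C : ℝ) :
    comp a e C [i, j] ≤ comp a e C [j, i] := by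
  have hj_served : a i ≤ max C (a j) + e j :=
    hij.trans <| (le_max_right _ _).trans (le_add_of_nonneg_right (he j))
  show max (max C (a i) + e i) (a j) + e j ≤ max (max C (a j) + e j) (a i) + e i
  rw [max_eq_left hj_served]
  have : max (max C (a i) + e i) (a j) ≤ max C (a j) + e i :=
    max_le (by gcongr) ((le_max_right _ _).trans (le_add_of_nonneg_right (he i)))
  linarith

lemma comp_cons_le_append_singleton (he : ∀ k, 0 ≤ e k) (i : ℕ) (S : List ℕ)
    (hS : ∀ j ∈ S, a i ≤ a j) (C : ℝ) : comp a e C (i :: S) ≤ comp a e C (S ++ [i]) := by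
  induction S generalizing C with
  | nil => exact le_rfl
  | cons j S ih =>
    calc comp a e C (i :: j :: S) = comp a e (comp a e C [i, j]) S := rfl
      _ ≤ comp a e (comp a e C [j, i]) S :=
          comp_mono S (comp_pair_le_swap he (hS j List.mem_cons_self) C)
      _ = comp a e (max C (a j) + e j) (i :: S) := rfl
      _ ≤ comp a e (max C (a j) + e j) (S ++ [i]) :=
          ih (fun k hk => hS k (List.mem_cons_of_mem _ hk)) _
      _ = comp a e C (j :: S ++ [i]) := rfl

theorem comp_le_erase_append_singleton (he : ∀ k, 0 ≤ e k) (i : ℕ) {l : List ℕ}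
    (hl : l.Pairwise (fun j k => a j ≤ a k)) (C : ℝ) :
    comp a e C l ≤ comp a e C (l.erase i ++ [i]) := by
  induction l generalizing C with
  | nil => exact le_add_of_le_of_nonneg (le_max_left _ _) (he i)
  | cons j l ih =>
    obtain ⟨hj, hl⟩ := List.pairwise_cons.mp hl
    by_cases hji : j = i
    · subst hji
      rw [List.erase_cons_head]
      exact comp_cons_le_append_singleton he j l hj C
    · rw [List.erase_cons_tail (by simpa using hji)]
      exact ih hl _

end Exchange

theorem induction_step_general (n : ℕ) (a e : ℕ → ℝ)
    (he : ∀ i, 0 ≤ e i) (hsorted : Monotone a) :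
    ∀ i ∈ List.range (n + 1),
      makespan a e (List.range (n + 1)) ≤
        makespan a e (((List.range (n + 1)).erase i) ++ [i]) := by
  intro i _
  have hfcfs : (List.range (n + 1)).Pairwise (fun j k => a j ≤ a k) :=
    List.pairwise_lt_range.imp fun h => hsorted h.le
  exact comp_le_erase_append_singleton he i hfcfs 0

/-- for `n+1` tasks with sorted arrivals, under the induction hypothesis
that FCFS minimizes the makespan for any `n` tasks, any ordering processing the remaining
tasks in FCFS order followed by task `i` has makespan at least that of the full FCFS
ordering `(0,1,…,n)`. -/
theorem induction_step (n : ℕ) (a e : ℕ → ℝ)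
    (ha0 : ∀ i, 0 ≤ a i) (he : ∀ i, 0 ≤ e i) (hsorted : Monotone a)
    (IH : ∀ l l' : List ℕ, l.length = n → l'.Perm l →
      l.Pairwise (fun i j => a i ≤ a j) → makespan a e l ≤ makespan a e l') :
    ∀ i ∈ List.range (n + 1),
      makespan a e (List.range (n + 1)) ≤
        makespan a e (((List.range (n + 1)).erase i) ++ [i]) :=
  induction_step_general n a e he hsorted
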